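/- If ξ1,...,ξ_m is an enumeration of the domain points of a triangulation, then the map sending a coefficient vector (w_1,...,w_m) to the spline Σ_h w_h ψ_{ξ_h} is a linear isomorphism onto S⁰_d(Δ); in particular {ψ_ξ : ξ ∈ D_{d,Δ}} is a basis of S⁰_d(Δ) and dim S⁰_d(Δ) equals the number of domain points. -/

import Mathlib

open Finset
open scoped Classical

noncomputable abbrev E2 := EuclideanSpace ℝ (Fin 2)

noncomputable def bern (b1 b2 b3 : E2 → ℝ) (d i j k : ℕ) (v : E2) : ℝ :=
  ((Nat.factorial d : ℝ) / (Nat.factorial i * Nat.factorial j * Nat.factorial k)) *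
    b1 v ^ i * b2 v ^ j * b3 v ^ k

noncomputable def domPt (vert : ℕ → Fin 3 → E2) (d : ℕ) (T : ℕ) (t : Fin 3 → ℕ) : E2 :=
  (d : ℝ)⁻¹ • ((t 0 : ℝ) • vert T 0 + (t 1 : ℝ) • vert T 1 + (t 2 : ℝ) • vert T 2)

lemma sum_push {M : Type*} [AddCommMonoid M] {m n : ℕ} {ι : Fin m → Fin n}
    (hι : Function.Injective ι) {g : Fin n → M} (hg : ∀ i, (∀ l, ι l ≠ i) → g i = 0) :
    ∑ l, g (ι l) = ∑ i, g i := by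
  rw [← Finset.sum_image (f := g) (g := ι) (fun a _ b _ h => hι h)]
  refine Finset.sum_subset (Finset.subset_univ _) ?_
  intro i _ hi
  refine hg i fun l hl => hi ?_
  simp only [Finset.mem_image]
  exact ⟨l, Finset.mem_univ l, hl⟩

lemma prod_push {M : Type*} [CommMonoid M] {m n : ℕ} {ι : Fin m → Fin n}
    (hι : Function.Injective ι) {g : Fin n → M} (hg : ∀ i, (∀ l, ι l ≠ i) → g i = 1) :
    ∏ l, g (ι l) = ∏ i, g i := by
  rw [← Finset.prod_image (f := g) (g := ι) (fun a _ b _ h => hι h)]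
  refine Finset.prod_subset (Finset.subset_univ _) ?_
  intro i _ hi
  refine hg i fun l hl => hi ?_
  simp only [Finset.mem_image]
  exact ⟨l, Finset.mem_univ l, hl⟩

lemma bary_unique {m : ℕ} {σ : Fin m → E2} (hσ : AffineIndependent ℝ σ)
    {w w' : Fin m → ℝ} (hw : ∑ i, w i = 1) (hw' : ∑ i, w' i = 1)
    (h : ∑ i, w i • σ i = ∑ i, w' i • σ i) : w = w' := by
  refine (affineIndependent_iff_eq_of_fintype_affineCombination_eq ℝ σ).mp hσ w w' hw hw' ?_
  rw [Finset.univ.affineCombination_eq_linear_combination σ w hw,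
      Finset.univ.affineCombination_eq_linear_combination σ w' hw', h]

lemma mem_hull {k : ℕ} (q : Fin k → E2) (μ : Fin k → ℝ) (h0 : ∀ i, 0 ≤ μ i)
    (h1 : ∑ i, μ i = 1) : ∑ i, μ i • q i ∈ convexHull ℝ (Set.range q) :=
  (convex_convexHull ℝ _).sum_mem (fun i _ => h0 i) h1
    (fun i _ => subset_convexHull ℝ _ (Set.mem_range_self i))
-- assume snoc_eq, mono_ind from s2 (copy here for standalone test)
open Finset
open scoped Classical

lemma snoc_eq {n : ℕ} (s : Fin (n+1) → ℕ) :
    Fin.snoc (fun i : Fin n => s i.castSucc) (s (Fin.last n)) = s := by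
  funext i
  refine Fin.lastCases ?_ (fun j => ?_) i
  · simp
  · simp

lemma mono_ind (n : ℕ) : ∀ (F : Finset (Fin n → ℕ)) (c : (Fin n → ℕ) → ℝ),
    (∀ u : Fin n → ℝ, (∀ i, 0 < u i) → ∑ s ∈ F, c s * ∏ i, u i ^ s i = 0) →
    ∀ s ∈ F, c s = 0 := by
  induction n with
  | zero =>
    intro F c H s hs
    have hF : F = {s} :=
      Finset.eq_singleton_iff_unique_mem.mpr ⟨hs, fun x _ => Subsingleton.elim x s⟩
    have := H (fun i => i.elim0) (fun i => i.elim0)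
    simpa [hF] using this
  | succ n ih =>
    intro F c H s hs
    have key : ∀ (u : Fin n → ℝ), (∀ i, 0 < u i) → ∀ (k : ℕ),
        ∑ s ∈ F.filter (fun s => s (Fin.last n) = k),
          c s * ∏ i : Fin n, u i ^ s i.castSucc = 0 := by
      intro u hu k
      set p : Polynomial ℝ :=
        ∑ s ∈ F, Polynomial.C (c s * ∏ i : Fin n, u i ^ s i.castSucc) *
          Polynomial.X ^ (s (Fin.last n)) with hp
      have hproot : ∀ x : ℝ, 0 < x → p.eval x = 0 := by
        intro x hx
        have hH := H (Fin.snoc u x) (fun i => by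
          refine Fin.lastCases ?_ (fun j => ?_) i
          · simpa using hx
          · simpa using hu j)
        rw [hp]
        simp only [Polynomial.eval_finset_sum, Polynomial.eval_mul, Polynomial.eval_C,
          Polynomial.eval_pow, Polynomial.eval_X]
        rw [← hH]
        refine Finset.sum_congr rfl fun t _ => ?_
        rw [Fin.prod_univ_castSucc]
        simp only [Fin.snoc_castSucc, Fin.snoc_last]
        ring
      have hp0 : p = 0 := by
        refine p.eq_zero_of_infinite_isRoot ?_
        refine Set.Infinite.mono ?_ (Set.Ioi_infinite (0:ℝ))
        intro x hx
        exact hproot x hx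
      have hcoeff : p.coeff k = 0 := by rw [hp0]; simp
      rw [hp, Polynomial.finset_sum_coeff] at hcoeff
      simp only [Polynomial.coeff_C_mul, Polynomial.coeff_X_pow, mul_ite, mul_one,
        mul_zero] at hcoeff
      rw [Finset.sum_filter, ← hcoeff]
      refine Finset.sum_congr rfl fun t _ => ?_
      congr 1
      exact propext eq_comm
    -- apply ih
    have hinj : ∀ a ∈ F.filter (fun s => s (Fin.last n) = s (Fin.last n)) , True → True := fun _ _ _ => trivial
    clear hinj
    have hinj : ∀ a ∈ F.filter (fun t => t (Fin.last n) = s (Fin.last n)),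
        ∀ b ∈ F.filter (fun t => t (Fin.last n) = s (Fin.last n)),
        (fun i : Fin n => a i.castSucc) = (fun i : Fin n => b i.castSucc) → a = b := by
      intro a ha b hb hab
      rw [Finset.mem_filter] at ha hb
      rw [← snoc_eq a, ← snoc_eq b, ha.2, hb.2, hab]
    have hmem : (fun i : Fin n => s i.castSucc) ∈
        (F.filter (fun t => t (Fin.last n) = s (Fin.last n))).image
          (fun t => fun i : Fin n => t i.castSucc) := by
      refine Finset.mem_image.mpr ⟨s, ?_, rfl⟩
      rw [Finset.mem_filter]; exact ⟨hs, rfl⟩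
    have hih := ih _ (fun v => c (Fin.snoc v (s (Fin.last n)))) ?_ _ hmem
    · rw [snoc_eq] at hih
      exact hih
    · intro u hu
      rw [Finset.sum_image hinj, ← key u hu (s (Fin.last n))]
      refine Finset.sum_congr rfl fun t ht => ?_
      rw [Finset.mem_filter] at ht
      simp only [← ht.2, snoc_eq]

lemma simplex_ind (m d : ℕ) (hd : 1 ≤ d) (c : (Fin m → ℕ) → ℝ)
    (H : ∀ μ : Fin m → ℝ, (∀ i, 0 < μ i) → ∑ i, μ i = 1 →
      ∑ s ∈ Finset.Nat.antidiagonalTuple m d, c s * ∏ i, μ i ^ s i = 0) :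
    ∀ s ∈ Finset.Nat.antidiagonalTuple m d, c s = 0 := by
  match m with
  | 0 =>
    intro s hs
    rw [Finset.Nat.mem_antidiagonalTuple] at hs
    simp at hs
    omega
  | n + 1 =>
    intro s hs
    -- the tuples in the antidiagonal are determined by their first n entries
    have hdet : ∀ t ∈ Finset.Nat.antidiagonalTuple (n+1) d,
        Fin.snoc (fun i : Fin n => t i.castSucc) (d - ∑ i : Fin n, t i.castSucc) = t := by
      intro t ht
      rw [Finset.Nat.mem_antidiagonalTuple] at ht
      rw [Fin.sum_univ_castSucc] at ht
      have : d - ∑ i : Fin n, t i.castSucc = t (Fin.last n) := by omega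
      rw [this, snoc_eq]
    have hinj : ∀ a ∈ Finset.Nat.antidiagonalTuple (n+1) d,
        ∀ b ∈ Finset.Nat.antidiagonalTuple (n+1) d,
        (fun i : Fin n => a i.castSucc) = (fun i : Fin n => b i.castSucc) → a = b := by
      intro a ha b hb hab
      rw [← hdet a ha, ← hdet b hb, hab]
    have hmem : (fun i : Fin n => s i.castSucc) ∈
        (Finset.Nat.antidiagonalTuple (n+1) d).image (fun t => fun i : Fin n => t i.castSucc) :=
      Finset.mem_image.mpr ⟨s, hs, rfl⟩
    have hih := mono_ind n _
        (fun v => c (Fin.snoc v (d - ∑ i : Fin n, v i))) ?_ _ hmem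
    · rw [hdet s hs] at hih
      exact hih
    · intro u hu
      rw [Finset.sum_image hinj]
      have hstep : ∀ t ∈ Finset.Nat.antidiagonalTuple (n+1) d,
          c (Fin.snoc (fun i : Fin n => t i.castSucc)
              (d - ∑ i : Fin n, (fun i : Fin n => t i.castSucc) i)) *
            ∏ i : Fin n, u i ^ t i.castSucc
          = c t * ∏ i : Fin n, u i ^ t i.castSucc := by
        intro t ht
        congr 1
        exact congrArg c (hdet t ht)
      rw [Finset.sum_congr rfl hstep]
      -- now substitute μ i = (snoc u 1) i / S
      set S : ℝ := ∑ i : Fin (n+1), (Fin.snoc u 1 : Fin (n+1) → ℝ) i with hS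
      have hpos : ∀ i, 0 < (Fin.snoc u 1 : Fin (n+1) → ℝ) i := by
        intro i
        refine Fin.lastCases ?_ (fun j => ?_) i
        · simp
        · simpa using hu j
      have hSpos : 0 < S := Finset.sum_pos (fun i _ => hpos i) Finset.univ_nonempty
      have hμpos : ∀ i, 0 < (Fin.snoc u 1 : Fin (n+1) → ℝ) i / S :=
        fun i => div_pos (hpos i) hSpos
      have hμsum : ∑ i, (Fin.snoc u 1 : Fin (n+1) → ℝ) i / S = 1 := by
        rw [← Finset.sum_div, ← hS, div_self hSpos.ne']
      have hH := H _ hμpos hμsum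
      have hterm : ∀ t ∈ Finset.Nat.antidiagonalTuple (n+1) d,
          c t * ∏ i, ((Fin.snoc u 1 : Fin (n+1) → ℝ) i / S) ^ t i
          = (c t * ∏ i : Fin n, u i ^ t i.castSucc) * (S ^ d)⁻¹ := by
        intro t ht
        rw [Finset.Nat.mem_antidiagonalTuple] at ht
        have h1 : ∀ i, ((Fin.snoc u 1 : Fin (n+1) → ℝ) i / S) ^ t i
            = (Fin.snoc u 1 : Fin (n+1) → ℝ) i ^ t i * (S⁻¹) ^ t i := by
          intro i; rw [div_eq_mul_inv, mul_pow]
        simp only [h1]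
        rw [Finset.prod_mul_distrib, Finset.prod_pow_eq_pow_sum, ht]
        rw [Fin.prod_univ_castSucc]
        simp only [Fin.snoc_castSucc, Fin.snoc_last, one_pow, mul_one, inv_pow]
        ring
      rw [Finset.sum_congr rfl hterm, ← Finset.sum_mul] at hH
      rcases mul_eq_zero.mp hH with h | h
      · exact h
      · exact absurd h (by positivity)

/-- pushforward of a tuple along an injection of index sets -/
def pushMap {m : ℕ} {M : Type*} [AddCommMonoid M] (ι : Fin m → Fin 3) (μ : Fin m → M) :
    Fin 3 → M := fun i => ∑ l, if ι l = i then μ l else 0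

lemma pushMap_apply {m : ℕ} {M : Type*} [AddCommMonoid M] {ι : Fin m → Fin 3}
    (hι : Function.Injective ι) (μ : Fin m → M) (l : Fin m) : pushMap ι μ (ι l) = μ l := by
  simp only [pushMap]
  rw [Finset.sum_eq_single l]
  · simp
  · intro bb _ hb
    rw [if_neg (fun h => hb (hι h))]
  · intro h; exact absurd (Finset.mem_univ l) h

lemma pushMap_apply_nmem {m : ℕ} {M : Type*} [AddCommMonoid M] {ι : Fin m → Fin 3}
    (μ : Fin m → M) {i : Fin 3} (hi : ∀ l, ι l ≠ i) : pushMap ι μ i = 0 := by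
  simp only [pushMap]
  rw [Finset.sum_eq_zero]
  intro l _
  rw [if_neg (hi l)]

lemma pushMap_sum {m : ℕ} {M : Type*} [AddCommMonoid M] (ι : Fin m → Fin 3) (μ : Fin m → M) :
    ∑ i, pushMap ι μ i = ∑ l, μ l := by
  simp only [pushMap]
  rw [Finset.sum_comm]
  refine Finset.sum_congr rfl fun l _ => ?_
  simp

lemma pushMap_nonneg {m : ℕ} {ι : Fin m → Fin 3} {μ : Fin m → ℝ} (hμ : ∀ l, 0 ≤ μ l)
    (i : Fin 3) : 0 ≤ pushMap ι μ i := by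
  refine Finset.sum_nonneg fun l _ => ?_
  by_cases h : ι l = i <;> simp [h, hμ l]

lemma pushMap_smul_sum {m : ℕ} (ι : Fin m → Fin 3) (μ : Fin m → ℝ) (q : Fin 3 → E2) :
    ∑ i, pushMap ι μ i • q i = ∑ l, μ l • q (ι l) := by
  simp only [pushMap, Finset.sum_smul, ite_smul, zero_smul]
  rw [Finset.sum_comm]
  refine Finset.sum_congr rfl fun l _ => ?_
  simp

/-- restriction of a full Bernstein sum to a face -/
lemma face_sum {m d : ℕ} {ιq : Fin m → Fin 3} (hq : Function.Injective ιq)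
    (C : (Fin 3 → ℕ) → ℝ) (μ : Fin m → ℝ) :
    ∑ u ∈ Finset.Nat.antidiagonalTuple 3 d,
      C u * (((d.factorial : ℝ) / ∏ i, ((u i).factorial : ℝ)) * ∏ i, pushMap ιq μ i ^ u i)
    = ∑ r ∈ Finset.Nat.antidiagonalTuple m d,
      C (pushMap ιq r) *
        (((d.factorial : ℝ) / ∏ l, ((r l).factorial : ℝ)) * ∏ l, μ l ^ r l) := by
  have hpushinj : ∀ a ∈ Finset.Nat.antidiagonalTuple m d,
      ∀ bb ∈ Finset.Nat.antidiagonalTuple m d,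
      pushMap ιq a = pushMap ιq bb → a = bb := by
    intro a _ bb _ hab
    funext l
    have := congrFun hab (ιq l)
    rwa [pushMap_apply hq, pushMap_apply hq] at this
  have hterm : ∀ r ∈ Finset.Nat.antidiagonalTuple m d,
      C (pushMap ιq r) * (((d.factorial : ℝ) / ∏ i, ((pushMap ιq r i).factorial : ℝ)) *
          ∏ i, pushMap ιq μ i ^ pushMap ιq r i)
      = C (pushMap ιq r) *
          (((d.factorial : ℝ) / ∏ l, ((r l).factorial : ℝ)) * ∏ l, μ l ^ r l) := by
    intro r _
    have h1 : ∏ i, ((pushMap ιq r i).factorial : ℝ) = ∏ l, ((r l).factorial : ℝ) := by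
      rw [← prod_push hq (g := fun i => ((pushMap ιq r i).factorial : ℝ))
        (fun i hi => by simp [pushMap_apply_nmem r hi])]
      exact Finset.prod_congr rfl fun l _ => by rw [pushMap_apply hq]
    have h2 : ∏ i, pushMap ιq μ i ^ pushMap ιq r i = ∏ l, μ l ^ r l := by
      rw [← prod_push hq (g := fun i => pushMap ιq μ i ^ pushMap ιq r i)
        (fun i hi => by simp [pushMap_apply_nmem r hi])]
      exact Finset.prod_congr rfl fun l _ => by
        rw [pushMap_apply hq, pushMap_apply hq]
    rw [h1, h2]
  have hsub : (Finset.Nat.antidiagonalTuple m d).image (pushMap ιq)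
      ⊆ Finset.Nat.antidiagonalTuple 3 d := by
    intro u hu
    rw [Finset.mem_image] at hu
    obtain ⟨r, hr, rfl⟩ := hu
    rw [Finset.Nat.mem_antidiagonalTuple] at hr ⊢
    rw [pushMap_sum]
    exact hr
  have hvanish : ∀ u ∈ Finset.Nat.antidiagonalTuple 3 d,
      u ∉ (Finset.Nat.antidiagonalTuple m d).image (pushMap ιq) →
      C u * (((d.factorial : ℝ) / ∏ i, ((u i).factorial : ℝ)) * ∏ i, pushMap ιq μ i ^ u i)
        = 0 := by
    intro u hu hnotim
    have hzero : (∀ i, (∀ l, ιq l ≠ i) → u i = 0) → False := by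
      intro hsupp
      apply hnotim
      rw [Finset.mem_image]
      refine ⟨fun l => u (ιq l), ?_, ?_⟩
      · rw [Finset.Nat.mem_antidiagonalTuple]
        rw [Finset.Nat.mem_antidiagonalTuple] at hu
        rw [sum_push hq hsupp]
        exact hu
      · funext i
        by_cases hi : ∃ l, ιq l = i
        · obtain ⟨l, rfl⟩ := hi
          rw [pushMap_apply hq]
        · push_neg at hi
          rw [pushMap_apply_nmem _ hi, hsupp i hi]
    by_cases hsupp : ∀ i, (∀ l, ιq l ≠ i) → u i = 0
    · exact absurd hsupp (fun h => hzero h)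
    · push_neg at hsupp
      obtain ⟨i, hi1, hi2⟩ := hsupp
      have hzp : ∏ j, pushMap ιq μ j ^ u j = 0 := by
        refine Finset.prod_eq_zero (Finset.mem_univ i) ?_
        rw [pushMap_apply_nmem _ hi1]
        exact zero_pow hi2
      rw [hzp]
      ring
  have h3 := Finset.sum_subset hsub hvanish
  rw [Finset.sum_image hpushinj] at h3
  rw [← h3]
  exact Finset.sum_congr rfl hterm

lemma consist (d : ℕ) (hd : 1 ≤ d)
    (p p' : Fin 3 → E2) (hp : AffineIndependent ℝ p) (hp' : AffineIndependent ℝ p')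
    (b b' : Fin 3 → E2 → ℝ)
    (hbs : ∀ v, ∑ i, b i v = 1) (hbr : ∀ v, ∑ i, b i v • p i = v)
    (hbs' : ∀ v, ∑ i, b' i v = 1) (hbr' : ∀ v, ∑ i, b' i v • p' i = v)
    (hcap : convexHull ℝ (Set.range p) ∩ convexHull ℝ (Set.range p')
        ⊆ convexHull ℝ (Set.range p ∩ Set.range p'))
    (f : E2 → ℝ) (c c' : (Fin 3 → ℕ) → ℝ)
    (hc : ∀ v ∈ convexHull ℝ (Set.range p),
      f v = ∑ t ∈ Finset.Nat.antidiagonalTuple 3 d,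
        c t * (((d.factorial : ℝ) / ∏ i, ((t i).factorial : ℝ)) * ∏ i, b i v ^ t i))
    (hc' : ∀ v ∈ convexHull ℝ (Set.range p'),
      f v = ∑ t ∈ Finset.Nat.antidiagonalTuple 3 d,
        c' t * (((d.factorial : ℝ) / ∏ i, ((t i).factorial : ℝ)) * ∏ i, b' i v ^ t i))
    (t t' : Fin 3 → ℕ) (ht : t ∈ Finset.Nat.antidiagonalTuple 3 d)
    (ht' : t' ∈ Finset.Nat.antidiagonalTuple 3 d)
    (hxi : ∑ i, ((t i : ℝ) / d) • p i = ∑ i, ((t' i : ℝ) / d) • p' i) :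
    c t = c' t' := by
  have hd0 : (0:ℝ) < d := by exact_mod_cast Nat.lt_of_lt_of_le Nat.zero_lt_one hd
  rw [Finset.Nat.mem_antidiagonalTuple] at ht ht'
  have htw1 : ∑ i, ((t i : ℝ) / d) = 1 := by
    rw [← Finset.sum_div]
    rw [show ∑ i, ((t i : ℝ)) = ((∑ i, t i : ℕ) : ℝ) by push_cast; ring, ht]
    exact div_self hd0.ne'
  have htw1' : ∑ i, ((t' i : ℝ) / d) = 1 := by
    rw [← Finset.sum_div]
    rw [show ∑ i, ((t' i : ℝ)) = ((∑ i, t' i : ℕ) : ℝ) by push_cast; ring, ht']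
    exact div_self hd0.ne'
  have hxip : (∑ i, ((t i : ℝ) / d) • p i) ∈ convexHull ℝ (Set.range p) :=
    mem_hull p _ (fun i => div_nonneg (Nat.cast_nonneg _) hd0.le) htw1
  have hxip' : (∑ i, ((t i : ℝ) / d) • p i) ∈ convexHull ℝ (Set.range p') := by
    rw [hxi]
    exact mem_hull p' _ (fun i => div_nonneg (Nat.cast_nonneg _) hd0.le) htw1'
  have hS : (∑ i, ((t i : ℝ) / d) • p i) ∈ convexHull ℝ (Set.range p ∩ Set.range p') :=
    hcap ⟨hxip, hxip'⟩
  have hSfin : ((Finset.image p Finset.univ ∩ Finset.image p' Finset.univ : Finset E2) : Set E2)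
      = Set.range p ∩ Set.range p' := by
    simp [Set.image_univ]
  rw [← hSfin, Finset.convexHull_eq] at hS
  obtain ⟨wgt, hw0, hw1, hwc⟩ := hS
  set Sfin : Finset E2 := Finset.image p Finset.univ ∩ Finset.image p' Finset.univ with hSfin2
  rw [Finset.centerMass_eq_of_sum_1 _ _ hw1] at hwc
  simp only [id] at hwc
  -- enumerate the common vertices
  set m : ℕ := Sfin.card with hm
  set e := Sfin.equivFin with he
  set σ : Fin m → E2 := fun l => (e.symm l : E2) with hσdef
  have hσinj : Function.Injective σ := fun a bb hab => e.symm.injective (Subtype.ext hab)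
  have hσmem : ∀ l, σ l ∈ Sfin := fun l => (e.symm l).2
  have himg : Finset.image σ Finset.univ = Sfin := by
    refine Finset.eq_of_subset_of_card_le ?_ ?_
    · intro x hx
      rw [Finset.mem_image] at hx
      obtain ⟨l, _, rfl⟩ := hx
      exact hσmem l
    · rw [Finset.card_image_of_injective _ hσinj, Finset.card_univ, Fintype.card_fin]
  set ν : Fin m → ℝ := fun l => wgt (σ l) with hν
  have hν1 : ∑ l, ν l = 1 := by
    rw [hν, ← Finset.sum_image (f := wgt) (g := σ) (fun a _ bb _ h => hσinj h), himg]
    exact hw1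
  have hν0 : ∀ l, 0 ≤ ν l := fun l => hw0 _ (hσmem l)
  have hνξ : ∑ l, ν l • σ l = ∑ i, ((t i : ℝ) / d) • p i := by
    rw [← hwc, ← himg, Finset.sum_image (f := fun y => wgt y • y) (g := σ)
      (fun a _ bb _ h => hσinj h)]
  -- choose index maps
  have hσboth : ∀ l, (∃ i, p i = σ l) ∧ (∃ i, p' i = σ l) := by
    intro l
    have hl := hσmem l
    rw [hSfin2] at hl
    simp only [Finset.mem_inter, Finset.mem_image, Finset.mem_univ, true_and] at hl
    exact hl
  have hσp : ∀ l, ∃ i, p i = σ l := fun l => (hσboth l).1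
  have hσp' : ∀ l, ∃ i, p' i = σ l := fun l => (hσboth l).2
  set ι : Fin m → Fin 3 := fun l => (hσp l).choose with hιdef
  have hιp : ∀ l, p (ι l) = σ l := fun l => (hσp l).choose_spec
  set ι' : Fin m → Fin 3 := fun l => (hσp' l).choose with hιdef'
  have hιp' : ∀ l, p' (ι' l) = σ l := fun l => (hσp' l).choose_spec
  have hιinj : Function.Injective ι := by
    intro a bb hab
    exact hσinj (by rw [← hιp a, ← hιp bb, hab])
  have hιinj' : Function.Injective ι' := by
    intro a bb hab
    exact hσinj (by rw [← hιp' a, ← hιp' bb, hab])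
  -- barycentric coordinates of ξ with respect to p and p'
  have hbaryξ : (fun i => (t i : ℝ) / d) = pushMap ι ν := by
    refine bary_unique hp htw1 ?_ ?_
    · rw [pushMap_sum]; exact hν1
    · rw [pushMap_smul_sum, ← hνξ]
      exact Finset.sum_congr rfl fun l _ => by rw [hιp l]
  have hbaryξ' : (fun i => (t' i : ℝ) / d) = pushMap ι' ν := by
    refine bary_unique hp' htw1' ?_ ?_
    · rw [pushMap_sum]; exact hν1
    · rw [pushMap_smul_sum, ← hxi, ← hνξ]
      exact Finset.sum_congr rfl fun l _ => by rw [hιp' l]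
  have htsupp : ∀ i, (∀ l, ι l ≠ i) → t i = 0 := by
    intro i hi
    have h1 := congrFun hbaryξ i
    rw [pushMap_apply_nmem _ hi] at h1
    field_simp at h1
    simpa using h1
  have htsupp' : ∀ i, (∀ l, ι' l ≠ i) → t' i = 0 := by
    intro i hi
    have h1 := congrFun hbaryξ' i
    rw [pushMap_apply_nmem _ hi] at h1
    field_simp at h1
    simpa using h1
  set s : Fin m → ℕ := fun l => t (ι l) with hsdef
  have hsmem : s ∈ Finset.Nat.antidiagonalTuple m d := by
    rw [Finset.Nat.mem_antidiagonalTuple]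
    rw [show ∑ l, s l = ∑ l, t (ι l) from rfl, sum_push hιinj htsupp]
    exact ht
  have hνs : ∀ l, ν l = (s l : ℝ) / d := by
    intro l
    have h1 := congrFun hbaryξ (ι l)
    rw [pushMap_apply hιinj] at h1
    rw [← h1]
  have hs' : ∀ l, t' (ι' l) = s l := by
    intro l
    have h1 := congrFun hbaryξ' (ι' l)
    rw [pushMap_apply hιinj', hνs l] at h1
    field_simp at h1
    exact_mod_cast h1
  have htpush : t = pushMap ι s := by
    funext i
    by_cases hi : ∃ l, ι l = i
    · obtain ⟨l, rfl⟩ := hi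
      rw [pushMap_apply hιinj]
    · push_neg at hi
      rw [pushMap_apply_nmem _ hi, htsupp i hi]
  have htpush' : t' = pushMap ι' s := by
    funext i
    by_cases hi : ∃ l, ι' l = i
    · obtain ⟨l, rfl⟩ := hi
      rw [pushMap_apply hιinj', hs' l]
    · push_neg at hi
      rw [pushMap_apply_nmem _ hi, htsupp' i hi]
  -- the main identity via independence on the face
  have hmain : ∀ r ∈ Finset.Nat.antidiagonalTuple m d,
      (c (pushMap ι r) - c' (pushMap ι' r)) *
        ((d.factorial : ℝ) / ∏ l, ((r l).factorial : ℝ)) = 0 := by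
    refine simplex_ind m d hd _ ?_
    intro μ hμ hμ1
    set v : E2 := ∑ l, μ l • σ l with hv
    have hvpush : ∀ (q : Fin 3 → E2) (ιq : Fin m → Fin 3), (∀ l, q (ιq l) = σ l) →
        ∑ i, pushMap ιq μ i • q i = v := by
      intro q ιq hqp
      rw [pushMap_smul_sum, hv]
      exact Finset.sum_congr rfl fun l _ => by rw [hqp l]
    have hvp : v ∈ convexHull ℝ (Set.range p) := by
      rw [← hvpush p ι hιp]
      exact mem_hull p _ (pushMap_nonneg (fun l => (hμ l).le))
        (by rw [pushMap_sum]; exact hμ1)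
    have hvp' : v ∈ convexHull ℝ (Set.range p') := by
      rw [← hvpush p' ι' hιp']
      exact mem_hull p' _ (pushMap_nonneg (fun l => (hμ l).le))
        (by rw [pushMap_sum]; exact hμ1)
    have hb1 : ∀ i, b i v = pushMap ι μ i := by
      have := bary_unique hp (w := fun i => b i v) (w' := pushMap ι μ) (hbs v)
        (by rw [pushMap_sum]; exact hμ1)
        (by rw [hbr v, hvpush p ι hιp])
      exact fun i => congrFun this i
    have hb1' : ∀ i, b' i v = pushMap ι' μ i := by
      have := bary_unique hp' (w := fun i => b' i v) (w' := pushMap ι' μ) (hbs' v)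
        (by rw [pushMap_sum]; exact hμ1)
        (by rw [hbr' v, hvpush p' ι' hιp'])
      exact fun i => congrFun this i
    have e1 := hc v hvp
    have e2 := hc' v hvp'
    simp only [hb1] at e1
    simp only [hb1'] at e2
    rw [face_sum hιinj c μ] at e1
    rw [face_sum hιinj' c' μ] at e2
    have : ∑ r ∈ Finset.Nat.antidiagonalTuple m d,
        ((c (pushMap ι r) - c' (pushMap ι' r)) *
          ((d.factorial : ℝ) / ∏ l, ((r l).factorial : ℝ))) * ∏ l, μ l ^ r l
        = (∑ r ∈ Finset.Nat.antidiagonalTuple m d,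
            c (pushMap ι r) *
              (((d.factorial : ℝ) / ∏ l, ((r l).factorial : ℝ)) * ∏ l, μ l ^ r l))
          - ∑ r ∈ Finset.Nat.antidiagonalTuple m d,
            c' (pushMap ι' r) *
              (((d.factorial : ℝ) / ∏ l, ((r l).factorial : ℝ)) * ∏ l, μ l ^ r l) := by
      rw [← Finset.sum_sub_distrib]
      exact Finset.sum_congr rfl fun r _ => by ring
    rw [this, ← e1, ← e2, sub_self]
  have hfin := hmain s hsmem
  rw [← htpush, ← htpush'] at hfin
  have hK : ((d.factorial : ℝ) / ∏ l, ((s l).factorial : ℝ)) ≠ 0 := by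
    have h1 : (0:ℝ) < (d.factorial : ℝ) := by exact_mod_cast d.factorial_pos
    have h2 : (0:ℝ) < ∏ l, ((s l).factorial : ℝ) := by
      refine Finset.prod_pos fun l _ => ?_
      exact_mod_cast (s l).factorial_pos
    positivity
  have := mul_eq_zero.mp hfin
  rcases this with h | h
  · linarith [sub_eq_zero.mp h]
  · exact absurd h hK

/-- The map sending a coefficient vector `(w_ξ)_{ξ ∈ D_{d,Δ}}` to the
spline `∑_ξ w_ξ ψ_ξ` is a linear isomorphism onto `S⁰_d(Δ)`: it is (trivially) linear, it
is injective (as functions on `Ω`), every spline in `S⁰_d(Δ)` is in its range, and every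
function in its range is a spline in `S⁰_d(Δ)`.  In particular `{ψ_ξ}` is a basis of
`S⁰_d(Δ)` and `dim S⁰_d(Δ)` equals the number of domain points. -/
theorem stmt_15
    (d : ℕ) (hd : 1 ≤ d)
    (Δ : Finset ℕ) (vert : ℕ → Fin 3 → E2)
    (hnd : ∀ T ∈ Δ, AffineIndependent ℝ (vert T))
    -- Δ is a (simplicial) triangulation: two distinct triangles meet in the convex hull of
    -- their common vertices (i.e. in a common vertex, a common edge, or not at all)
    (htri : ∀ T ∈ Δ, ∀ T' ∈ Δ, T ≠ T' →
      convexHull ℝ (Set.range (vert T)) ∩ convexHull ℝ (Set.range (vert T'))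
        = convexHull ℝ (Set.range (vert T) ∩ Set.range (vert T')))
    (bary : ℕ → Fin 3 → E2 → ℝ)
    (hbsum : ∀ T ∈ Δ, ∀ v : E2, bary T 0 v + bary T 1 v + bary T 2 v = 1)
    (hbrep : ∀ T ∈ Δ, ∀ v : E2,
      v = bary T 0 v • vert T 0 + bary T 1 v • vert T 1 + bary T 2 v • vert T 2)
    (DP : Finset E2)
    (hDP : DP = Δ.biUnion fun T =>
      (Finset.Nat.antidiagonalTuple 3 d).image (domPt vert d T))
    (ψ : E2 → E2 → ℝ)
    (hψ : ∀ T ∈ Δ, ∀ v ∈ convexHull ℝ (Set.range (vert T)), ∀ ξ ∈ DP,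
      ψ ξ v = ∑ t ∈ Finset.Nat.antidiagonalTuple 3 d,
        (if domPt vert d T t = ξ then
          bern (bary T 0) (bary T 1) (bary T 2) d (t 0) (t 1) (t 2) v else 0))
    (Ω : Set E2) (hΩ : Ω = ⋃ T ∈ Δ, convexHull ℝ (Set.range (vert T))) :
    -- injectivity (linear independence of the ψ_ξ over Ω)
    (∀ w w' : E2 → ℝ,
        (∀ v ∈ Ω, (∑ ξ ∈ DP, w ξ * ψ ξ v) = ∑ ξ ∈ DP, w' ξ * ψ ξ v) →
        ∀ ξ ∈ DP, w ξ = w' ξ) ∧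
    -- surjectivity: every spline in S⁰_d(Δ) is a combination of the ψ_ξ
    (∀ f : E2 → ℝ, ContinuousOn f Ω →
        (∀ T ∈ Δ, ∃ c : (Fin 3 → ℕ) → ℝ, ∀ v ∈ convexHull ℝ (Set.range (vert T)),
          f v = ∑ t ∈ Finset.Nat.antidiagonalTuple 3 d,
            c t * bern (bary T 0) (bary T 1) (bary T 2) d (t 0) (t 1) (t 2) v) →
        ∃ w : E2 → ℝ, ∀ v ∈ Ω, f v = ∑ ξ ∈ DP, w ξ * ψ ξ v) ∧
    -- the range consists of splines in S⁰_d(Δ)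
    (∀ w : E2 → ℝ,
        ContinuousOn (fun v => ∑ ξ ∈ DP, w ξ * ψ ξ v) Ω ∧
        ∀ T ∈ Δ, ∃ c : (Fin 3 → ℕ) → ℝ, ∀ v ∈ convexHull ℝ (Set.range (vert T)),
          (∑ ξ ∈ DP, w ξ * ψ ξ v) = ∑ t ∈ Finset.Nat.antidiagonalTuple 3 d,
            c t * bern (bary T 0) (bary T 1) (bary T 2) d (t 0) (t 1) (t 2) v) := by
  have hd0 : (0:ℝ) < d := by exact_mod_cast Nat.lt_of_lt_of_le Nat.zero_lt_one hd
  have hbs : ∀ T ∈ Δ, ∀ v, ∑ i, bary T i v = 1 := by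
    intro T hT v
    rw [Fin.sum_univ_three]
    exact hbsum T hT v
  have hbr : ∀ T ∈ Δ, ∀ v, ∑ i, bary T i v • vert T i = v := by
    intro T hT v
    rw [Fin.sum_univ_three]
    exact (hbrep T hT v).symm
  have hdomPt : ∀ T t, domPt vert d T t = ∑ i, ((t i : ℝ)/d) • vert T i := by
    intro T t
    rw [Fin.sum_univ_three]
    simp [domPt, smul_smul, smul_add, div_eq_inv_mul]
  have hbern : ∀ T (t : Fin 3 → ℕ) v,
      bern (bary T 0) (bary T 1) (bary T 2) d (t 0) (t 1) (t 2) v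
      = ((d.factorial : ℝ) / ∏ i, ((t i).factorial : ℝ)) * ∏ i, bary T i v ^ t i := by
    intro T t v
    rw [Fin.prod_univ_three, Fin.prod_univ_three]
    simp only [bern]
    ring
  have hdomDP : ∀ T ∈ Δ, ∀ t ∈ Finset.Nat.antidiagonalTuple 3 d, domPt vert d T t ∈ DP := by
    intro T hT t ht
    rw [hDP]
    exact Finset.mem_biUnion.mpr ⟨T, hT, Finset.mem_image_of_mem _ ht⟩
  have hspl : ∀ (w : E2 → ℝ), ∀ T ∈ Δ, ∀ v ∈ convexHull ℝ (Set.range (vert T)),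
      ∑ ξ ∈ DP, w ξ * ψ ξ v
      = ∑ t ∈ Finset.Nat.antidiagonalTuple 3 d,
        w (domPt vert d T t) * bern (bary T 0) (bary T 1) (bary T 2) d (t 0) (t 1) (t 2) v := by
    intro w T hT v hv
    have h1 : ∀ ξ ∈ DP, w ξ * ψ ξ v = ∑ t ∈ Finset.Nat.antidiagonalTuple 3 d,
        if domPt vert d T t = ξ then
          w ξ * bern (bary T 0) (bary T 1) (bary T 2) d (t 0) (t 1) (t 2) v else 0 := by
      intro ξ hξ
      rw [hψ T hT v hv ξ hξ, Finset.mul_sum]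
      exact Finset.sum_congr rfl fun t _ => by rw [mul_ite, mul_zero]
    rw [Finset.sum_congr rfl h1, Finset.sum_comm]
    refine Finset.sum_congr rfl fun t ht => ?_
    have h2 : ∀ ξ ∈ DP,
        (if domPt vert d T t = ξ then
          w ξ * bern (bary T 0) (bary T 1) (bary T 2) d (t 0) (t 1) (t 2) v else 0)
        = if domPt vert d T t = ξ then
          w (domPt vert d T t) * bern (bary T 0) (bary T 1) (bary T 2) d (t 0) (t 1) (t 2) v
          else 0 := by
      intro ξ _
      split_ifs with h
      · rw [h]
      · rfl
    rw [Finset.sum_congr rfl h2, Finset.sum_ite_eq DP (domPt vert d T t)]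
    rw [if_pos (hdomDP T hT t ht)]
  have hcons : ∀ T ∈ Δ, ∀ T' ∈ Δ, ∀ (f : E2 → ℝ) (c c' : (Fin 3 → ℕ) → ℝ),
      (∀ v ∈ convexHull ℝ (Set.range (vert T)),
        f v = ∑ t ∈ Finset.Nat.antidiagonalTuple 3 d,
          c t * bern (bary T 0) (bary T 1) (bary T 2) d (t 0) (t 1) (t 2) v) →
      (∀ v ∈ convexHull ℝ (Set.range (vert T')),
        f v = ∑ t ∈ Finset.Nat.antidiagonalTuple 3 d,
          c' t * bern (bary T' 0) (bary T' 1) (bary T' 2) d (t 0) (t 1) (t 2) v) →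
      ∀ t ∈ Finset.Nat.antidiagonalTuple 3 d, ∀ t' ∈ Finset.Nat.antidiagonalTuple 3 d,
      domPt vert d T t = domPt vert d T' t' → c t = c' t' := by
    intro T hT T' hT' f c c' hcT hcT' t ht t' ht' heq
    have hcap : convexHull ℝ (Set.range (vert T)) ∩ convexHull ℝ (Set.range (vert T'))
        ⊆ convexHull ℝ (Set.range (vert T) ∩ Set.range (vert T')) := by
      by_cases hTT : T = T'
      · subst hTT
        intro x hx
        rw [Set.inter_self]
        exact hx.1
      · exact (htri T hT T' hT' hTT).le
    refine consist d hd (vert T) (vert T') (hnd T hT) (hnd T' hT') (bary T) (bary T')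
      (hbs T hT) (hbr T hT) (hbs T' hT') (hbr T' hT') hcap f c c' ?_ ?_ t t' ht ht' ?_
    · intro v hv
      rw [hcT v hv]
      exact Finset.sum_congr rfl fun u _ => by rw [hbern]
    · intro v hv
      rw [hcT' v hv]
      exact Finset.sum_congr rfl fun u _ => by rw [hbern]
    · rw [← hdomPt, ← hdomPt]
      exact heq
  refine ⟨?_, ?_, ?_⟩
  · -- injectivity
    intro w w' hww ξ hξ
    have hex : ∃ T ∈ Δ, ∃ t ∈ Finset.Nat.antidiagonalTuple 3 d, domPt vert d T t = ξ := by
      rw [hDP] at hξ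
      simpa [Finset.mem_biUnion, Finset.mem_image] using hξ
    obtain ⟨T, hT, t, ht, hdom⟩ := hex
    have hrep0 : ∀ v ∈ convexHull ℝ (Set.range (vert T)),
        (0:ℝ) = ∑ u ∈ Finset.Nat.antidiagonalTuple 3 d,
          (w (domPt vert d T u) - w' (domPt vert d T u)) *
            bern (bary T 0) (bary T 1) (bary T 2) d (u 0) (u 1) (u 2) v := by
      intro v hv
      have hvΩ : v ∈ Ω := by
        rw [hΩ]
        exact Set.mem_iUnion₂.mpr ⟨T, hT, hv⟩
      have h1 := hww v hvΩ
      rw [hspl w T hT v hv, hspl w' T hT v hv] at h1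
      have h2 := sub_eq_zero.mpr h1
      rw [← Finset.sum_sub_distrib] at h2
      rw [← h2]
      exact Finset.sum_congr rfl fun u _ => by ring
    have hfin := hcons T hT T hT (fun _ => 0)
      (fun u => w (domPt vert d T u) - w' (domPt vert d T u)) (fun _ => 0)
      hrep0 (by intro v hv; simp) t ht t ht rfl
    have hfin' : w ξ - w' ξ = 0 := by
      have : w (domPt vert d T t) - w' (domPt vert d T t) = 0 := hfin
      rwa [hdom] at this
    linarith
  · -- surjectivity
    intro f _ hloc
    choose C hC using hloc
    have hC2 : ∀ T (hT : T ∈ Δ), ∀ v ∈ convexHull ℝ (Set.range (vert T)),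
        f v = ∑ t ∈ Finset.Nat.antidiagonalTuple 3 d,
          (if h : T ∈ Δ then C T h else 0) t *
            bern (bary T 0) (bary T 1) (bary T 2) d (t 0) (t 1) (t 2) v := by
      intro T hT v hv
      simp only [dif_pos hT]
      exact hC T hT v hv
    refine ⟨fun ξ => if h : ∃ Tt : ℕ × (Fin 3 → ℕ), Tt.1 ∈ Δ ∧
        Tt.2 ∈ Finset.Nat.antidiagonalTuple 3 d ∧ domPt vert d Tt.1 Tt.2 = ξ
        then (if h2 : h.choose.1 ∈ Δ then C h.choose.1 h2 else 0) h.choose.2 else 0, ?_⟩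
    intro v hv
    rw [hΩ] at hv
    obtain ⟨T, hT, hvT⟩ := Set.mem_iUnion₂.mp hv
    rw [hspl _ T hT v hvT, hC2 T hT v hvT]
    refine Finset.sum_congr rfl fun t ht => ?_
    congr 1
    have hex : ∃ Tt : ℕ × (Fin 3 → ℕ), Tt.1 ∈ Δ ∧
        Tt.2 ∈ Finset.Nat.antidiagonalTuple 3 d ∧ domPt vert d Tt.1 Tt.2 = domPt vert d T t :=
      ⟨(T, t), hT, ht, rfl⟩
    rw [dif_pos hex]
    obtain ⟨hT0, ht0, hdom0⟩ := hex.choose_spec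
    exact (hcons _ hT0 T hT f _ _ (hC2 _ hT0) (hC2 T hT) _ ht0 t ht hdom0).symm
  · -- range
    intro w
    constructor
    · -- continuity
      have hbary_cont : ∀ T ∈ Δ, ∀ i, Continuous (bary T i) := by
        intro T hT i
        have htop : affineSpan ℝ (Set.range (vert T)) = ⊤ := by
          rw [(hnd T hT).affineSpan_eq_top_iff_card_eq_finrank_add_one]
          simp [finrank_euclideanSpace_fin]
        set B : AffineBasis (Fin 3) ℝ E2 := ⟨vert T, hnd T hT, htop⟩ with hB
        have hcoord : bary T i = fun v => B.coord i v := by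
          funext v
          have h1 := bary_unique (hnd T hT) (w := fun j => bary T j v)
            (w' := fun j => B.coord j v) (hbs T hT v) (B.sum_coord_apply_eq_one v) ?_
          · exact congrFun h1 i
          · rw [hbr T hT v]
            exact (B.linear_combination_coord_eq_self v).symm
        rw [hcoord]
        exact (B.coord i).continuous_of_finiteDimensional
      have hgcont : ∀ T ∈ Δ, Continuous (fun v =>
          ∑ t ∈ Finset.Nat.antidiagonalTuple 3 d,
            w (domPt vert d T t) *
              bern (bary T 0) (bary T 1) (bary T 2) d (t 0) (t 1) (t 2) v) := by
        intro T hT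
        refine continuous_finset_sum _ fun t _ => ?_
        simp only [bern]
        exact continuous_const.mul
          (((continuous_const.mul ((hbary_cont T hT 0).pow _)).mul
            ((hbary_cont T hT 1).pow _)).mul ((hbary_cont T hT 2).pow _))
      have hΩ' : Ω = ⋃ (T : {x // x ∈ Δ}), convexHull ℝ (Set.range (vert T)) := by
        rw [hΩ]
        ext x
        simp
      rw [hΩ']
      refine (locallyFinite_of_finite _).continuousOn_iUnion ?_ ?_
      · intro T
        exact ((Set.finite_range (vert (T:ℕ))).isCompact_convexHull (𝕜 := ℝ)).isClosed
      · intro T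
        refine ((hgcont T T.2).continuousOn).congr ?_
        intro v hv
        exact hspl w T T.2 v hv
    · intro T hT
      exact ⟨fun t => w (domPt vert d T t), fun v hv => hspl w T hT v hv⟩
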